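/- Majorization is a preorder: writing 'f : X₁ ⟶ X₂ is majorized by g : Y₁ ⟶ Y₂' (all four objects carrying classical structures) for the existence of doubly stochastic morphisms h₁ : X₁ ⟶ Y₁ and h₂ : X₂ ⟶ Y₂ with g = h₁† ≫ f ≫ h₂, every morphism between classical structures is majorized by itself, and if f is majorized by g and g is majorized by h then f is majorized by h. -/

import Mathlib

open CategoryTheory MonoidalCategory

universe v u

variable {C : Type u} [Category.{v} C] [MonoidalCategory C] [SymmetricCategory C]

/-- A dagger structure on a symmetric monoidal category: an involutive,
identity-on-objects, contravariant functor that coherently preserves the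
symmetric monoidal structure. -/
structure Dagger (C : Type u) [Category.{v} C] [MonoidalCategory C]
    [SymmetricCategory C] where
  dag : ∀ {A B : C}, (A ⟶ B) → (B ⟶ A)
  dag_comp : ∀ {A B E : C} (f : A ⟶ B) (g : B ⟶ E), dag (f ≫ g) = dag g ≫ dag f
  dag_id : ∀ A : C, dag (𝟙 A) = 𝟙 A
  dag_dag : ∀ {A B : C} (f : A ⟶ B), dag (dag f) = f
  dag_tensor : ∀ {A B A' B' : C} (f : A ⟶ B) (g : A' ⟶ B'),
    dag (f ⊗ₘ g) = dag f ⊗ₘ dag g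
  dag_assoc : ∀ A B E : C, dag (α_ A B E).hom = (α_ A B E).inv
  dag_lUnit : ∀ A : C, dag (λ_ A).hom = (λ_ A).inv
  dag_rUnit : ∀ A : C, dag (ρ_ A).hom = (ρ_ A).inv
  dag_braid : ∀ A B : C, dag (β_ A B).hom = (β_ A B).inv

/-- Positivity of an endomorphism: `e = g† ≫ g` for some `g : W ⟶ A`. -/
def Dagger.IsPositive (D : Dagger C) {A : C} (e : A ⟶ A) : Prop :=
  ∃ (W : C) (g : W ⟶ A), e = D.dag g ≫ g

/-- A classical structure: a commutative monoid object which, together with the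
daggers of its multiplication and unit, is a special Frobenius algebra. -/
structure ClassicalStructure (D : Dagger C) (X : C) where
  mul : X ⊗ X ⟶ X
  unit : 𝟙_ C ⟶ X
  mul_assoc' : (α_ X X X).hom ≫ (𝟙 X ⊗ₘ mul) ≫ mul = (mul ⊗ₘ 𝟙 X) ≫ mul
  one_mul' : (unit ⊗ₘ 𝟙 X) ≫ mul = (λ_ X).hom
  mul_one' : (𝟙 X ⊗ₘ unit) ≫ mul = (ρ_ X).hom
  mul_comm' : (β_ X X).hom ≫ mul = mul
  frobenius' : (𝟙 X ⊗ₘ D.dag mul) ≫ (α_ X X X).inv ≫ (mul ⊗ₘ 𝟙 X) = mul ≫ D.dag mul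
  special' : D.dag mul ≫ mul = 𝟙 X

namespace ClassicalStructure

variable {D : Dagger C}

/-- The comultiplication `Δ := ∇†`. -/
def comul {X : C} (S : ClassicalStructure D X) : X ⟶ X ⊗ X := D.dag S.mul

/-- The counit `⊤ := ⊥†`. -/
def counit {X : C} (S : ClassicalStructure D X) : X ⟶ 𝟙_ C := D.dag S.unit

/-- The induced Bell state `η := ⊥ ≫ Δ`. -/
def eta {X : C} (S : ClassicalStructure D X) : 𝟙_ C ⟶ X ⊗ X := S.unit ≫ S.comul

/-- The induced Bell costate `ε := ∇ ≫ ⊤`. -/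
def eps {X : C} (S : ClassicalStructure D X) : X ⊗ X ⟶ 𝟙_ C := S.mul ≫ S.counit

/-- The decoherence `Ξ := ∇ ≫ Δ`. -/
def Xi {X : C} (S : ClassicalStructure D X) : X ⊗ X ⟶ X ⊗ X := S.mul ≫ S.comul

end ClassicalStructure

/-- A morphism `f : X ⟶ Y` between classical structures is classical if
`(Δ_X ⊗ 𝟙_Y) ≫ (𝟙_X ⊗ f ⊗ 𝟙_Y) ≫ (𝟙_X ⊗ ∇_Y)` is positive. -/
def IsClassical {X Y : C} (D : Dagger C) (XS : ClassicalStructure D X)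
    (YS : ClassicalStructure D Y) (f : X ⟶ Y) : Prop :=
  D.IsPositive ((XS.comul ⊗ₘ 𝟙 Y) ≫ ((𝟙 X ⊗ₘ f) ⊗ₘ 𝟙 Y) ≫ (α_ X Y Y).hom ≫ (𝟙 X ⊗ₘ YS.mul))

/-- The conjugate `f_* := (η_Y ⊗ 𝟙_X) ≫ (𝟙_Y ⊗ f† ⊗ 𝟙_X) ≫ (𝟙_Y ⊗ ε_X)`. -/
def conjugate {X Y : C} (D : Dagger C) (XS : ClassicalStructure D X)
    (YS : ClassicalStructure D Y) (f : X ⟶ Y) : X ⟶ Y :=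
  (λ_ X).inv ≫ (YS.eta ⊗ₘ 𝟙 X) ≫ (α_ Y Y X).hom ≫ (𝟙 Y ⊗ₘ (D.dag f ⊗ₘ 𝟙 X)) ≫
    (𝟙 Y ⊗ₘ XS.eps) ≫ (ρ_ Y).hom

/-- The convolution `f ⋆ g := Δ_X ≫ (f_* ⊗ g) ≫ ∇_Y`. -/
def convol {X Y : C} (D : Dagger C) (XS : ClassicalStructure D X)
    (YS : ClassicalStructure D Y) (f g : X ⟶ Y) : X ⟶ Y :=
  XS.comul ≫ (conjugate D XS YS f ⊗ₘ g) ≫ YS.mul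

/-- A relation is a convolution-idempotent: `r = r ⋆ r`. -/
def IsRelation {X Y : C} (D : Dagger C) (XS : ClassicalStructure D X)
    (YS : ClassicalStructure D Y) (r : X ⟶ Y) : Prop :=
  r = convol D XS YS r r

/-- Single-valuedness: `r ≫ Δ_Y = Δ_X ≫ (r ⊗ r)`. -/
def SingleValued {X Y : C} (D : Dagger C) (XS : ClassicalStructure D X)
    (YS : ClassicalStructure D Y) (r : X ⟶ Y) : Prop :=
  r ≫ YS.comul = XS.comul ≫ (r ⊗ₘ r)

/-- Totality: `r ≫ ⊤_Y = ⊤_X`. -/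
def TotalRel {X Y : C} (D : Dagger C) (XS : ClassicalStructure D X)
    (YS : ClassicalStructure D Y) (r : X ⟶ Y) : Prop :=
  r ≫ YS.counit = XS.counit

/-- A function is a single-valued total relation. -/
def IsFunctionRel {X Y : C} (D : Dagger C) (XS : ClassicalStructure D X)
    (YS : ClassicalStructure D Y) (r : X ⟶ Y) : Prop :=
  IsRelation D XS YS r ∧ SingleValued D XS YS r ∧ TotalRel D XS YS r

/-- The middle-four interchange `(X ⊗ Y) ⊗ (Z ⊗ W) ⟶ (X ⊗ Z) ⊗ (Y ⊗ W)`
built from associators and the braiding. -/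
def midSwap (X Y Z W : C) : (X ⊗ Y) ⊗ (Z ⊗ W) ⟶ (X ⊗ Z) ⊗ (Y ⊗ W) :=
  (α_ X Y (Z ⊗ W)).hom ≫ (𝟙 X ⊗ₘ (α_ Y Z W).inv) ≫ (𝟙 X ⊗ₘ ((β_ Y Z).hom ⊗ₘ 𝟙 W)) ≫
    (𝟙 X ⊗ₘ (α_ Z Y W).hom) ≫ (α_ X Z (Y ⊗ W)).inv

/-- The multiplication `∇_{X⊗Y} := (𝟙_X ⊗ β_{Y,X} ⊗ 𝟙_Y) ≫ (∇_X ⊗ ∇_Y)` of the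
tensor of two classical structures. -/
def tensorMul {X Y : C} {D : Dagger C} (XS : ClassicalStructure D X)
    (YS : ClassicalStructure D Y) : (X ⊗ Y) ⊗ (X ⊗ Y) ⟶ X ⊗ Y :=
  midSwap X Y X Y ≫ (XS.mul ⊗ₘ YS.mul)

/-- The unit `⊥_{X⊗Y} := ⊥_X ⊗ ⊥_Y` of the tensor of two classical structures. -/
def tensorUnit'' {X Y : C} {D : Dagger C} (XS : ClassicalStructure D X)
    (YS : ClassicalStructure D Y) : 𝟙_ C ⟶ X ⊗ Y :=
  (λ_ (𝟙_ C)).inv ≫ (XS.unit ⊗ₘ YS.unit)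

/-- Complete positivity of `g : X ⊗ X ⟶ Y ⊗ Y` relative to the self-dual compact
structures induced by the classical structures:
`(𝟙_X ⊗ η_X ⊗ 𝟙_Y) ≫ (𝟙_X ⊗ g ⊗ 𝟙_Y) ≫ (𝟙_{X⊗Y} ⊗ ε_Y)` is positive. -/
def IsCP {X Y : C} (D : Dagger C) (XS : ClassicalStructure D X)
    (YS : ClassicalStructure D Y) (g : X ⊗ X ⟶ Y ⊗ Y) : Prop :=
  D.IsPositive ((𝟙 X ⊗ₘ (λ_ Y).inv) ≫ (𝟙 X ⊗ₘ (XS.eta ⊗ₘ 𝟙 Y)) ≫ (𝟙 X ⊗ₘ (g ⊗ₘ 𝟙 Y)) ≫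
    (𝟙 X ⊗ₘ (α_ Y Y Y).hom) ≫ (α_ X Y (Y ⊗ Y)).inv ≫ (𝟙 (X ⊗ Y) ⊗ₘ YS.eps) ≫
    (ρ_ (X ⊗ Y)).hom)

/-- A stochastic morphism: classical and total. -/
def Stochastic {X Y : C} (D : Dagger C) (XS : ClassicalStructure D X)
    (YS : ClassicalStructure D Y) (s : X ⟶ Y) : Prop :=
  IsClassical D XS YS s ∧ TotalRel D XS YS s

/-- A doubly stochastic morphism: both `s` and `s†` are stochastic. -/
def DoublyStochastic {X Y : C} (D : Dagger C) (XS : ClassicalStructure D X)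
    (YS : ClassicalStructure D Y) (s : X ⟶ Y) : Prop :=
  Stochastic D XS YS s ∧ Stochastic D YS XS (D.dag s)

/-- `f : X₁ ⟶ X₂` is majorized by `g : Y₁ ⟶ Y₂` if `g = h₁† ≫ f ≫ h₂` for
doubly stochastic `h₁ : X₁ ⟶ Y₁`, `h₂ : X₂ ⟶ Y₂`. -/
def Majorized {X₁ X₂ Y₁ Y₂ : C} (D : Dagger C)
    (X₁S : ClassicalStructure D X₁) (X₂S : ClassicalStructure D X₂)
    (Y₁S : ClassicalStructure D Y₁) (Y₂S : ClassicalStructure D Y₂)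
    (f : X₁ ⟶ X₂) (g : Y₁ ⟶ Y₂) : Prop :=
  ∃ (h₁ : X₁ ⟶ Y₁) (h₂ : X₂ ⟶ Y₂),
    DoublyStochastic D X₁S Y₁S h₁ ∧ DoublyStochastic D X₂S Y₂S h₂ ∧
    g = D.dag h₁ ≫ f ≫ h₂

/-! Majorization is reflexive and transitive because doubly stochastic morphisms contain the
identities and are closed under composition. Totality clearly composes; the content is that
classical morphisms compose. Write `E f := (Δ_X ⊗ 𝟙) ≫ (𝟙 ⊗ f ⊗ 𝟙) ≫ (𝟙 ⊗ ∇_Y)` for the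
endomorphism of `X ⊗ Y` whose positivity defines classicality of `f : X ⟶ Y`. Capping the two
middle wires of `E f ⊗ E g` with `ε_Y`, and inserting the cup `η_Y` on the other side, yields
`E (f ≫ g)` by the Frobenius, unit and counit laws. So `E (f ≫ g) = c† ≫ (E f ⊗ E g) ≫ c`,
which is positive because positivity is stable under tensor products and conjugation. -/

namespace Dagger

variable (D : Dagger C)

theorem dag_assoc_inv (A B E : C) : D.dag (α_ A B E).inv = (α_ A B E).hom := by
  rw [← D.dag_assoc, D.dag_dag]

theorem dag_whiskerLeft (A : C) {B B' : C} (f : B ⟶ B') : D.dag (A ◁ f) = A ◁ D.dag f := by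
  rw [← id_tensorHom, D.dag_tensor, D.dag_id, id_tensorHom]

theorem dag_whiskerRight {B B' : C} (f : B ⟶ B') (A : C) : D.dag (f ▷ A) = D.dag f ▷ A := by
  rw [← tensorHom_id, D.dag_tensor, D.dag_id, tensorHom_id]

variable {D}

theorem IsPositive.conj {A B : C} {p : A ⟶ A} (hp : D.IsPositive p) (s : A ⟶ B) :
    D.IsPositive (D.dag s ≫ p ≫ s) := by
  obtain ⟨W, g, rfl⟩ := hp
  exact ⟨W, g ≫ s, by simp only [D.dag_comp, Category.assoc]⟩

theorem IsPositive.tensorHom {A B : C} {p : A ⟶ A} {q : B ⟶ B} (hp : D.IsPositive p)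
    (hq : D.IsPositive q) : D.IsPositive (p ⊗ₘ q) := by
  obtain ⟨W, g, rfl⟩ := hp
  obtain ⟨V, h, rfl⟩ := hq
  exact ⟨W ⊗ V, g ⊗ₘ h, by rw [D.dag_tensor, tensorHom_comp_tensorHom]⟩

end Dagger

namespace ClassicalStructure

variable {D : Dagger C} {X : C} (S : ClassicalStructure D X)

theorem mul_assoc : (S.mul ▷ X) ≫ S.mul = (α_ X X X).hom ≫ (X ◁ S.mul) ≫ S.mul := by
  simpa only [id_tensorHom, tensorHom_id] using S.mul_assoc'.symm

theorem mul_one : (X ◁ S.unit) ≫ S.mul = (ρ_ X).hom := by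
  simpa only [id_tensorHom] using S.mul_one'

theorem comul_mul : S.comul ≫ S.mul = 𝟙 X := S.special'

theorem dag_comul : D.dag S.comul = S.mul := D.dag_dag _

theorem dag_eps : D.dag S.eps = S.eta := by
  rw [eps, D.dag_comp, counit, D.dag_dag, eta, comul]

theorem frobenius_whiskerLeft :
    (X ◁ S.comul) ≫ (α_ X X X).inv ≫ (S.mul ▷ X) = S.mul ≫ S.comul := by
  simpa only [id_tensorHom, tensorHom_id, comul] using S.frobenius'

theorem frobenius_whiskerRight :
    (S.comul ▷ X) ≫ (α_ X X X).hom ≫ (X ◁ S.mul) = S.mul ≫ S.comul := by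
  simpa only [id_tensorHom, tensorHom_id, D.dag_comp, D.dag_whiskerLeft, D.dag_whiskerRight,
    D.dag_assoc_inv, D.dag_dag, Category.assoc, comul] using congrArg D.dag S.frobenius'

theorem counit_comul : S.comul ≫ (S.counit ▷ X) = (λ_ X).inv := by
  simpa only [tensorHom_id, D.dag_comp, D.dag_whiskerRight, D.dag_lUnit, comul, counit] using
    congrArg D.dag S.one_mul'

theorem eta_mul : S.eta ≫ S.mul = S.unit := by
  rw [eta, Category.assoc, comul_mul, Category.comp_id]

theorem whiskerLeft_comul_eps :
    (X ◁ S.comul) ≫ (α_ X X X).inv ≫ (S.eps ▷ X) ≫ (λ_ X).hom = S.mul := by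
  calc _ = ((X ◁ S.comul) ≫ (α_ X X X).inv ≫ (S.mul ▷ X)) ≫ (S.counit ▷ X) ≫ (λ_ X).hom := by
          simp only [eps, comp_whiskerRight, Category.assoc]
    _ = S.mul := by
          rw [frobenius_whiskerLeft, Category.assoc, ← Category.assoc S.comul, counit_comul,
            Iso.inv_hom_id, Category.comp_id]

theorem whiskerLeft_eta_mul_mul :
    (ρ_ X).inv ≫ (X ◁ S.eta) ≫ (α_ X X X).inv ≫ (S.mul ▷ X) ≫ S.mul = 𝟙 X := by
  rw [mul_assoc, Iso.inv_hom_id_assoc, ← whiskerLeft_comp_assoc, eta_mul, mul_one,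
    Iso.inv_hom_id]

end ClassicalStructure

section Classical

open ClassicalStructure

variable {D : Dagger C}

def classicalityMap {X Y : C} (XS : ClassicalStructure D X) (YS : ClassicalStructure D Y)
    (f : X ⟶ Y) : X ⊗ Y ⟶ X ⊗ Y :=
  (XS.comul ⊗ₘ 𝟙 Y) ≫ ((𝟙 X ⊗ₘ f) ⊗ₘ 𝟙 Y) ≫ (α_ X Y Y).hom ≫ (𝟙 X ⊗ₘ YS.mul)

theorem classicalityMap_eq {X Y : C} (XS : ClassicalStructure D X)
    (YS : ClassicalStructure D Y) (f : X ⟶ Y) :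
    classicalityMap XS YS f = (XS.comul ▷ Y) ≫ (α_ X X Y).hom ≫ (X ◁ ((f ▷ Y) ≫ YS.mul)) := by
  dsimp only [classicalityMap]
  monoidal

def capMiddle {Y : C} (YS : ClassicalStructure D Y) (X Z : C) : (X ⊗ Y) ⊗ (Y ⊗ Z) ⟶ X ⊗ Z :=
  (α_ X Y (Y ⊗ Z)).hom ≫ (X ◁ ((α_ Y Y Z).inv ≫ (YS.eps ▷ Z) ≫ (λ_ Z).hom))

def cupMiddle {Y : C} (YS : ClassicalStructure D Y) (X Z : C) : X ⊗ Z ⟶ (X ⊗ Y) ⊗ (Y ⊗ Z) :=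
  (X ◁ ((λ_ Z).inv ≫ (YS.eta ▷ Z) ≫ (α_ Y Y Z).hom)) ≫ (α_ X Y (Y ⊗ Z)).inv

theorem dag_capMiddle {Y : C} (YS : ClassicalStructure D Y) (X Z : C) :
    D.dag (capMiddle YS X Z) = cupMiddle YS X Z := by
  simp only [capMiddle, cupMiddle, D.dag_comp, D.dag_whiskerLeft, D.dag_lUnit,
    D.dag_whiskerRight, dag_eps, D.dag_assoc_inv, D.dag_assoc, whiskerLeft_comp, Category.assoc]

theorem whiskerLeft_classicalityMap_eps {Y Z : C} (YS : ClassicalStructure D Y)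
    (ZS : ClassicalStructure D Z) (g : Y ⟶ Z) :
    (Y ◁ classicalityMap YS ZS g) ≫ (α_ Y Y Z).inv ≫ (YS.eps ▷ Z) ≫ (λ_ Z).hom
      = (α_ Y Y Z).inv ≫ (YS.mul ▷ Z) ≫ (g ▷ Z) ≫ ZS.mul := by
  calc _ = (Y ◁ (YS.comul ▷ Z)) ≫ (Y ◁ (α_ Y Y Z).hom) ≫ (α_ Y Y (Y ⊗ Z)).inv
          ≫ ((Y ⊗ Y) ◁ ((g ▷ Z) ≫ ZS.mul)) ≫ (YS.eps ▷ Z) ≫ (λ_ Z).hom := by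
        rw [classicalityMap_eq]
        monoidal
    _ = (Y ◁ (YS.comul ▷ Z)) ≫ (Y ◁ (α_ Y Y Z).hom) ≫ (α_ Y Y (Y ⊗ Z)).inv
          ≫ (YS.eps ▷ (Y ⊗ Z)) ≫ (λ_ (Y ⊗ Z)).hom ≫ (g ▷ Z) ≫ ZS.mul := by
        rw [whisker_exchange_assoc, leftUnitor_naturality]
    _ = (α_ Y Y Z).inv ≫ (((Y ◁ YS.comul) ≫ (α_ Y Y Y).inv ≫ (YS.eps ▷ Y) ≫ (λ_ Y).hom) ▷ Z)
          ≫ (g ▷ Z) ≫ ZS.mul := by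
        monoidal
    _ = _ := by
        rw [whiskerLeft_comul_eps]

theorem classicalityMap_comp {X Y Z : C} (XS : ClassicalStructure D X)
    (YS : ClassicalStructure D Y) (ZS : ClassicalStructure D Z) (f : X ⟶ Y) (g : Y ⟶ Z) :
    classicalityMap XS ZS (f ≫ g) = D.dag (capMiddle YS X Z)
      ≫ (classicalityMap XS YS f ⊗ₘ classicalityMap YS ZS g) ≫ capMiddle YS X Z := by
  let cup : Z ⟶ Y ⊗ (Y ⊗ Z) := (λ_ Z).inv ≫ (YS.eta ▷ Z) ≫ (α_ Y Y Z).hom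
  symm
  calc _ = (X ◁ cup) ≫ (α_ X Y (Y ⊗ Z)).inv ≫ (classicalityMap XS YS f ▷ (Y ⊗ Z))
          ≫ (α_ X Y (Y ⊗ Z)).hom ≫ (X ◁ ((Y ◁ classicalityMap YS ZS g)
          ≫ (α_ Y Y Z).inv ≫ (YS.eps ▷ Z) ≫ (λ_ Z).hom)) := by
        rw [dag_capMiddle, cupMiddle, capMiddle, MonoidalCategory.tensorHom_def]
        monoidal
    _ = (X ◁ cup) ≫ (XS.comul ▷ (Y ⊗ (Y ⊗ Z))) ≫ ((X ◁ f) ▷ (Y ⊗ (Y ⊗ Z)))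
          ≫ (α_ X Y (Y ⊗ (Y ⊗ Z))).hom ≫ (X ◁ ((α_ Y Y (Y ⊗ Z)).inv ≫ (YS.mul ▷ (Y ⊗ Z))
          ≫ (α_ Y Y Z).inv ≫ (YS.mul ▷ Z) ≫ (g ▷ Z) ≫ ZS.mul)) := by
        rw [whiskerLeft_classicalityMap_eps, classicalityMap_eq]
        monoidal
    _ = (XS.comul ▷ Z) ≫ ((X ◁ f) ▷ Z) ≫ ((X ⊗ Y) ◁ cup)
          ≫ (α_ X Y (Y ⊗ (Y ⊗ Z))).hom ≫ (X ◁ ((α_ Y Y (Y ⊗ Z)).inv ≫ (YS.mul ▷ (Y ⊗ Z))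
          ≫ (α_ Y Y Z).inv ≫ (YS.mul ▷ Z) ≫ (g ▷ Z) ≫ ZS.mul)) := by
        rw [whisker_exchange_assoc, whisker_exchange_assoc]
    _ = (XS.comul ▷ Z) ≫ (α_ X X Z).hom ≫ (X ◁ ((f ▷ Z) ≫ (((ρ_ Y).inv ≫ (Y ◁ YS.eta)
          ≫ (α_ Y Y Y).inv ≫ (YS.mul ▷ Y) ≫ YS.mul) ▷ Z) ≫ (g ▷ Z) ≫ ZS.mul)) := by
        monoidal
    _ = _ := by
        rw [whiskerLeft_eta_mul_mul, classicalityMap_eq]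
        monoidal

theorem isClassical_id {X : C} (XS : ClassicalStructure D X) : IsClassical D XS XS (𝟙 X) :=
  ⟨X, XS.comul, by rw [dag_comul, ← frobenius_whiskerRight]; monoidal⟩

theorem IsClassical.comp {X Y Z : C} {XS : ClassicalStructure D X}
    {YS : ClassicalStructure D Y} {ZS : ClassicalStructure D Z} {f : X ⟶ Y} {g : Y ⟶ Z}
    (hf : IsClassical D XS YS f) (hg : IsClassical D YS ZS g) : IsClassical D XS ZS (f ≫ g) := by
  change D.IsPositive (classicalityMap XS ZS (f ≫ g))
  rw [classicalityMap_comp XS YS ZS f g]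
  exact (Dagger.IsPositive.tensorHom hf hg).conj _

end Classical

section Stochastic

variable {D : Dagger C} {X Y Z : C} {XS : ClassicalStructure D X}
  {YS : ClassicalStructure D Y} {ZS : ClassicalStructure D Z} {f : X ⟶ Y} {g : Y ⟶ Z}

theorem TotalRel.comp (hf : TotalRel D XS YS f) (hg : TotalRel D YS ZS g) :
    TotalRel D XS ZS (f ≫ g) := by
  rw [TotalRel, Category.assoc, hg, hf]

theorem stochastic_id (XS : ClassicalStructure D X) : Stochastic D XS XS (𝟙 X) :=
  ⟨isClassical_id XS, Category.id_comp _⟩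

theorem Stochastic.comp (hf : Stochastic D XS YS f) (hg : Stochastic D YS ZS g) :
    Stochastic D XS ZS (f ≫ g) :=
  ⟨hf.1.comp hg.1, hf.2.comp hg.2⟩

theorem doublyStochastic_id (XS : ClassicalStructure D X) : DoublyStochastic D XS XS (𝟙 X) :=
  ⟨stochastic_id XS, by rw [D.dag_id]; exact stochastic_id XS⟩

theorem DoublyStochastic.comp (hf : DoublyStochastic D XS YS f)
    (hg : DoublyStochastic D YS ZS g) : DoublyStochastic D XS ZS (f ≫ g) :=
  ⟨hf.1.comp hg.1, by rw [D.dag_comp]; exact hg.2.comp hf.2⟩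

end Stochastic

section Majorized

variable {D : Dagger C} {X₁ X₂ Y₁ Y₂ Z₁ Z₂ : C}
  {X₁S : ClassicalStructure D X₁} {X₂S : ClassicalStructure D X₂}
  {Y₁S : ClassicalStructure D Y₁} {Y₂S : ClassicalStructure D Y₂}
  {Z₁S : ClassicalStructure D Z₁} {Z₂S : ClassicalStructure D Z₂}

theorem Majorized.refl (f : X₁ ⟶ X₂) : Majorized D X₁S X₂S X₁S X₂S f f :=
  ⟨𝟙 X₁, 𝟙 X₂, doublyStochastic_id X₁S, doublyStochastic_id X₂S, by
    rw [D.dag_id, Category.id_comp, Category.comp_id]⟩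

theorem Majorized.trans {f : X₁ ⟶ X₂} {g : Y₁ ⟶ Y₂} {h : Z₁ ⟶ Z₂}
    (hfg : Majorized D X₁S X₂S Y₁S Y₂S f g) (hgh : Majorized D Y₁S Y₂S Z₁S Z₂S g h) :
    Majorized D X₁S X₂S Z₁S Z₂S f h := by
  obtain ⟨h₁, h₂, hh₁, hh₂, rfl⟩ := hfg
  obtain ⟨k₁, k₂, hk₁, hk₂, rfl⟩ := hgh
  exact ⟨h₁ ≫ k₁, h₂ ≫ k₂, hh₁.comp hk₁, hh₂.comp hk₂, by
    simp only [D.dag_comp, Category.assoc]⟩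

end Majorized

/-- majorization is a preorder: reflexive and transitive. -/
theorem majorization_preorder (D : Dagger C) :
    (∀ (X₁ X₂ : C) (X₁S : ClassicalStructure D X₁) (X₂S : ClassicalStructure D X₂)
        (f : X₁ ⟶ X₂), Majorized D X₁S X₂S X₁S X₂S f f) ∧
    (∀ (X₁ X₂ Y₁ Y₂ Z₁ Z₂ : C)
        (X₁S : ClassicalStructure D X₁) (X₂S : ClassicalStructure D X₂)
        (Y₁S : ClassicalStructure D Y₁) (Y₂S : ClassicalStructure D Y₂)
        (Z₁S : ClassicalStructure D Z₁) (Z₂S : ClassicalStructure D Z₂)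
        (f : X₁ ⟶ X₂) (g : Y₁ ⟶ Y₂) (h : Z₁ ⟶ Z₂),
      Majorized D X₁S X₂S Y₁S Y₂S f g → Majorized D Y₁S Y₂S Z₁S Z₂S g h →
      Majorized D X₁S X₂S Z₁S Z₂S f h) :=
  ⟨fun _ _ _ _ f => Majorized.refl f, fun _ _ _ _ _ _ _ _ _ _ _ _ _ _ _ => Majorized.trans⟩
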